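/- Let k be an odd positive integer, S = ℤ/2kℤ, G = Aff(ℤ/2kℤ). Let s(2k) be the number of G-orbits of subsets D ⊆ S with |D| = k, trivial setwise stabilizer G_D = 1, and such that qD = S \ D for some q ∈ G (necessarily a quasipolarity). Let Q_rig(x) = (1/|G|)∑_{A⊆S}[G_A = 1]x^{|A|}. Then Q_rig(-1) = -s(2k). -/

import Mathlib

attribute [local instance] Classical.propDecidable


open Pointwise

def affPerm (n : ℕ) (u : ZMod n) (v : (ZMod n)ˣ) : Equiv.Perm (ZMod n) where
  toFun x := v * x + u
  invFun x := (v⁻¹ : (ZMod n)ˣ) * (x - u)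
  left_inv x := by simp
  right_inv x := by simp

def Aff (n : ℕ) : Subgroup (Equiv.Perm (ZMod n)) where
  carrier := {σ | ∃ u v, σ = affPerm n u v}
  one_mem' := ⟨0, 1, Equiv.ext fun x => by simp [affPerm]⟩
  mul_mem' := by
    rintro σ τ ⟨u1, v1, rfl⟩ ⟨u2, v2, rfl⟩
    exact ⟨v1 * u2 + u1, v1 * v2, Equiv.ext fun x => by
      simp [affPerm, Equiv.Perm.mul_apply, mul_add, mul_assoc, add_assoc]⟩
  inv_mem' := by
    rintro σ ⟨u, v, rfl⟩
    refine ⟨-(↑v⁻¹ * u), v⁻¹, Equiv.ext fun x => ?_⟩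
    simp [affPerm, Equiv.Perm.inv_def, Equiv.symm, mul_sub, sub_eq_add_neg, mul_add, mul_neg]

def AffK0 (n : ℕ) : Subgroup (Equiv.Perm (ZMod n)) where
  carrier := {σ | ∃ u v, Even u ∧ σ = affPerm n u v}
  one_mem' := ⟨0, 1, Even.zero, Equiv.ext fun x => by simp [affPerm]⟩
  mul_mem' := by
    rintro σ τ ⟨u1, v1, hu1, rfl⟩ ⟨u2, v2, hu2, rfl⟩
    exact ⟨v1 * u2 + u1, v1 * v2, (hu2.mul_left _).add hu1, Equiv.ext fun x => by
      simp [affPerm, Equiv.Perm.mul_apply, mul_add, mul_assoc, add_assoc]⟩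
  inv_mem' := by
    rintro σ ⟨u, v, hu, rfl⟩
    refine ⟨-(↑v⁻¹ * u), v⁻¹, (hu.mul_left _).neg, Equiv.ext fun x => ?_⟩
    simp [affPerm, Equiv.Perm.inv_def, Equiv.symm, mul_sub, sub_eq_add_neg, mul_add, mul_neg]

/-- The setoid on the subtype of elements of a `G`-set satisfying `P`, identifying two
elements when they lie in the same `G`-orbit. -/
def orbitSetoid (G : Type*) [Group G] {α : Type*} [MulAction G α] (P : α → Prop) :
    Setoid {a : α // P a} where
  r A B := ∃ g : G, g • A.1 = B.1
  iseqv := by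
    refine ⟨fun A => ⟨1, one_smul _ _⟩, ?_, ?_⟩
    · rintro A B ⟨g, hg⟩; exact ⟨g⁻¹, by rw [← hg, inv_smul_smul]⟩
    · rintro A B C ⟨g, hg⟩ ⟨g', hg'⟩; exact ⟨g' * g, by rw [mul_smul, hg, hg']⟩

/-!
Reduction mod 2 commutes with affine maps up to adding the parity of the translation part
(units of `ℤ/2kℤ` are odd), so an affine map either fixes the set `O` of odd residues or swaps it
with its complement. Hence the twist `A ↦ A ∆ O` turns "`g` fixes `A`" into "`g` fixes `A ∆ O`"
for even `g` and into "`g` maps `A` to `Aᶜ`" for odd `g`, and, `|O| = k` being odd, it reverses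
the sign `(-1)^|A|`. Rigid sets with a rigid twist therefore cancel in pairs. The remaining rigid
sets are exactly the strong dichotomies: an even `g` cannot map `A` to `Aᶜ`, since it would split
`O` into the two halves `O ∩ A` and `O \ A` of equal size. These all have odd size `k`, and `G`
acts freely on them, so there are `s(2k) · |G|` of them.
-/

open scoped symmDiff

theorem Fintype.sum_eq_zero_of_involutive_of_neg {ι M : Type*} [Fintype ι] [AddCommGroup M]
    [IsAddTorsionFree M] {f : ι → M} {σ : ι → ι} (hσ : Function.Involutive σ)
    (hf : ∀ i, f (σ i) = -f i) : ∑ i, f i = 0 := by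
  refine self_eq_neg.1 ?_
  calc ∑ i, f i = ∑ i, f (σ i) := (Equiv.sum_comp (hσ.toPerm σ) f).symm
    _ = -∑ i, f i := by simp only [hf, Finset.sum_neg_distrib]

namespace Finset

variable {α : Type*} [DecidableEq α]

theorem neg_one_pow_card_symmDiff {R : Type*} [Monoid R] [HasDistribNeg R] (s t : Finset α)
    (ht : Odd #t) : (-1 : R) ^ #(s ∆ t) = -(-1) ^ #s := by
  have hcard : #(s ∆ t) + 2 * #(s ∩ t) = #s + #t := by
    rw [symmDiff_eq_sup_sdiff_inf, card_sdiff_of_subset inf_le_sup]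
    have := card_union_add_card_inter s t
    have := card_le_card (inter_subset_union (s := s) (t := t))
    simp only [sup_eq_union, inf_eq_inter]
    omega
  calc (-1 : R) ^ #(s ∆ t) = (-1) ^ (#(s ∆ t) + 2 * #(s ∩ t)) := by
        rw [pow_add, pow_mul, neg_one_sq, one_pow, mul_one]
    _ = -(-1) ^ #s := by rw [hcard, pow_add, ht.neg_one_pow, mul_neg_one]

variable [Fintype α] {G : Type*} [Group G] [MulAction G α]

theorem smul_finset_compl (g : G) (s : Finset α) : g • sᶜ = (g • s)ᶜ := by
  rw [compl_eq_univ_sdiff, smul_finset_sdiff, smul_finset_univ, compl_eq_univ_sdiff]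

theorem two_mul_card_eq_of_smul_eq_compl {g : G} {s : Finset α} (h : g • s = sᶜ) :
    2 * #s = Fintype.card α := by
  have := card_compl_add_card s
  rw [← h, card_smul_finset] at this
  omega

theorem even_card_of_smul_eq_compl {g : G} {s t : Finset α} (hs : g • s = sᶜ) (ht : g • t = t) :
    Even #t := by
  have hcard : #(t ∩ s) = #(t \ s) := by
    rw [← card_smul_finset g, smul_finset_inter, ht, hs, ← sdiff_eq_inter_compl]
  have := card_inter_add_card_sdiff t s
  exact ⟨#(t ∩ s), by omega⟩

end Finset

section OrbitCount

variable {G α : Type*} [Group G] [MulAction G α]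

theorem orbitSetoid_eq_orbitRel (p : SubMulAction G α) :
    orbitSetoid G (· ∈ p) = MulAction.orbitRel G p := by
  ext A B
  rw [MulAction.orbitRel_apply, MulAction.mem_orbit_symm]
  exact ⟨fun ⟨g, hg⟩ => ⟨g, Subtype.ext hg⟩, fun ⟨g, hg⟩ => ⟨g, congrArg Subtype.val hg⟩⟩

theorem card_subtype_eq_card_quotient_orbitSetoid_mul (P : α → Prop)
    (hP : ∀ (g : G) (a : α), P a → P (g • a))
    (hfree : ∀ a, P a → MulAction.stabilizer G a = ⊥) :
    Nat.card {a // P a} = Nat.card (Quotient (orbitSetoid G P)) * Nat.card G := by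
  let p : SubMulAction G α := ⟨{a | P a}, fun g a => hP g a⟩
  have hfree' : ∀ a : p, MulAction.stabilizer G a = ⊥ := fun a => by
    rw [SubMulAction.stabilizer_of_subMul]; exact hfree a a.2
  change Nat.card p = Nat.card (Quotient (orbitSetoid G (· ∈ p))) * Nat.card G
  rw [← Nat.card_prod, orbitSetoid_eq_orbitRel p]
  exact Nat.card_congr (MulAction.selfEquivOrbitsQuotientProd hfree')

end OrbitCount

namespace Aff

open Finset

variable {k : ℕ}

noncomputable def parity (k : ℕ) : ZMod (2 * k) →+* ZMod 2 :=
  ZMod.castHom (dvd_mul_right 2 k) (ZMod 2)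

theorem parity_unit (v : (ZMod (2 * k))ˣ) : parity k v = 1 := by
  have h := v.isUnit.map (parity k)
  generalize parity k v = z at h
  fin_cases z
  · exact absurd h not_isUnit_zero
  · rfl

noncomputable def translationParity (g : Aff (2 * k)) : ZMod 2 :=
  parity k (g • (0 : ZMod (2 * k)))

theorem parity_smul (g : Aff (2 * k)) (x : ZMod (2 * k)) :
    parity k (g • x) = parity k x + translationParity g := by
  obtain ⟨u, v, hg⟩ := g.2
  simp only [translationParity, Subgroup.smul_def, Equiv.Perm.smul_def, hg, affPerm,
    Equiv.coe_fn_mk, map_add, map_mul, parity_unit, one_mul, mul_zero, zero_add]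

theorem parity_inv_smul (g : Aff (2 * k)) (x : ZMod (2 * k)) :
    parity k (g⁻¹ • x) = parity k x + translationParity g := by
  have h := parity_smul g (g⁻¹ • x)
  rw [smul_inv_smul] at h
  rw [h, add_assoc, CharTwo.add_self_eq_zero, add_zero]

theorem translationParity_one : translationParity (1 : Aff (2 * k)) = 0 := by
  simp [translationParity]

theorem translationParity_eq_zero_or_one (g : Aff (2 * k)) :
    translationParity g = 0 ∨ translationParity g = 1 := by
  generalize translationParity g = z
  revert z
  decide

variable [NeZero (2 * k)]

noncomputable def oddResidues (k : ℕ) [NeZero (2 * k)] : Finset (ZMod (2 * k)) :=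
  {x | parity k x = 1}

theorem card_oddResidues : #(oddResidues k) = k := by
  have hshift : #(oddResidues k)ᶜ = #(oddResidues k) := by
    refine card_equiv (Equiv.addRight 1) fun x => ?_
    simp only [oddResidues, mem_compl, mem_filter, mem_univ, true_and, Equiv.coe_addRight,
      map_add, map_one]
    generalize parity k x = z
    revert z
    decide
  have := card_compl_add_card (oddResidues k)
  rw [hshift, ZMod.card] at this
  omega

theorem smul_oddResidues_of_translationParity_eq_zero {g : Aff (2 * k)}
    (hg : translationParity g = 0) : g • oddResidues k = oddResidues k := by
  ext x
  simp [← inv_smul_mem_iff, oddResidues, parity_inv_smul, hg]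

theorem smul_oddResidues_of_translationParity_eq_one {g : Aff (2 * k)}
    (hg : translationParity g = 1) : g • oddResidues k = (oddResidues k)ᶜ := by
  ext x
  simp only [← inv_smul_mem_iff, oddResidues, mem_compl, mem_filter, mem_univ, true_and,
    parity_inv_smul, hg]
  generalize parity k x = z
  revert z
  decide

theorem smul_ne_compl_of_translationParity_eq_zero (hk : Odd k) (A : Finset (ZMod (2 * k)))
    {g : Aff (2 * k)} (hg : translationParity g = 0) : g • A ≠ Aᶜ := fun hA => by
  have := even_card_of_smul_eq_compl hA (smul_oddResidues_of_translationParity_eq_zero hg)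
  rw [card_oddResidues] at this
  exact Nat.not_even_iff_odd.2 hk this

noncomputable def twist (A : Finset (ZMod (2 * k))) : Finset (ZMod (2 * k)) :=
  A ∆ oddResidues k

theorem twist_involutive : Function.Involutive (twist (k := k)) :=
  fun _ => symmDiff_symmDiff_cancel_right _ _

theorem neg_one_pow_card_twist (hk : Odd k) (A : Finset (ZMod (2 * k))) :
    (-1 : ℚ) ^ #(twist A) = -(-1) ^ #A :=
  neg_one_pow_card_symmDiff A _ (by rwa [card_oddResidues])

theorem smul_twist_eq_twist_iff (g : Aff (2 * k)) (A : Finset (ZMod (2 * k))) :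
    g • twist A = twist A ↔
      translationParity g = 0 ∧ g • A = A ∨ translationParity g = 1 ∧ g • A = Aᶜ := by
  rcases translationParity_eq_zero_or_one g with hg | hg
  · rw [twist, smul_finset_symmDiff, smul_oddResidues_of_translationParity_eq_zero hg,
      symmDiff_left_inj]
    simp [hg]
  · rw [twist, smul_finset_symmDiff, smul_oddResidues_of_translationParity_eq_one hg,
      ← compl_symmDiff_compl, compl_compl, symmDiff_left_inj, compl_eq_comm, eq_comm]
    simp [hg]

def IsRigid (k : ℕ) (A : Finset (ZMod (2 * k))) : Prop :=
  MulAction.stabilizer (Aff (2 * k)) A = ⊥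

def IsStrongDichotomy (k : ℕ) [NeZero (2 * k)] (D : Finset (ZMod (2 * k))) : Prop :=
  #D = k ∧ IsRigid k D ∧ ∃ q : Aff (2 * k), q • D = Dᶜ

theorem isStrongDichotomy_smul {D : Finset (ZMod (2 * k))} (g : Aff (2 * k))
    (hD : IsStrongDichotomy k D) : IsStrongDichotomy k (g • D) := by
  obtain ⟨hcard, hrigid, q, hq⟩ := hD
  refine ⟨by rwa [card_smul_finset], ?_, g * q * g⁻¹, ?_⟩
  · rw [IsRigid, MulAction.stabilizer_smul_eq_stabilizer_map_conj, hrigid, Subgroup.map_bot]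
  · rw [mul_smul, mul_smul, inv_smul_smul, hq, smul_finset_compl]

theorem isStrongDichotomy_iff (hk : Odd k) (A : Finset (ZMod (2 * k))) :
    IsStrongDichotomy k A ↔ IsRigid k A ∧ ¬IsRigid k (twist A) := by
  have hG1 : translationParity (1 : Aff (2 * k)) ≠ 1 := by
    rw [translationParity_one]; decide
  unfold IsStrongDichotomy IsRigid
  rw [Subgroup.eq_bot_iff_forall (MulAction.stabilizer _ (twist A))]
  push Not
  simp only [MulAction.mem_stabilizer_iff, smul_twist_eq_twist_iff]
  constructor
  · rintro ⟨-, hrigid, q, hq⟩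
    rcases translationParity_eq_zero_or_one q with h0 | h1
    · exact absurd hq (smul_ne_compl_of_translationParity_eq_zero hk A h0)
    · exact ⟨hrigid, q, Or.inr ⟨h1, hq⟩, by rintro rfl; exact hG1 h1⟩
  · rintro ⟨hrigid, g, (⟨-, hgA⟩ | ⟨-, hgA⟩), hg1⟩
    · exact absurd ((Subgroup.eq_bot_iff_forall _).1 hrigid g hgA) hg1
    · have := two_mul_card_eq_of_smul_eq_compl hgA
      rw [ZMod.card] at this
      exact ⟨by omega, hrigid, g, hgA⟩

theorem sum_isRigid_neg_one_pow (hk : Odd k) :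
    ∑ A : Finset (ZMod (2 * k)), (if IsRigid k A then (-1 : ℚ) ^ #A else 0) =
      -Nat.card {D // IsStrongDichotomy k D} := by
  have hsplit : ∀ A, (if IsRigid k A then (-1 : ℚ) ^ #A else 0) =
      (if IsRigid k A ∧ IsRigid k (twist A) then (-1 : ℚ) ^ #A else 0) +
        if IsStrongDichotomy k A then (-1 : ℚ) ^ #A else 0 := by
    intro A
    rw [isStrongDichotomy_iff hk]
    split_ifs <;> simp_all
  have hcancel : ∑ A, (if IsRigid k A ∧ IsRigid k (twist A) then (-1 : ℚ) ^ #A else 0) = 0 := by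
    refine Fintype.sum_eq_zero_of_involutive_of_neg twist_involutive fun A => ?_
    simp only [twist_involutive A, neg_one_pow_card_twist hk, and_comm]
    split_ifs <;> simp
  have hstrong : ∀ A, (if IsStrongDichotomy k A then (-1 : ℚ) ^ #A else 0) =
      if IsStrongDichotomy k A then -1 else 0 := fun A => by
    split_ifs with hA
    · rw [hA.1, hk.neg_one_pow]
    · rfl
  simp only [hsplit, Finset.sum_add_distrib, hcancel, zero_add, hstrong]
  simp [Finset.sum_ite, Nat.card_eq_fintype_card, Fintype.card_subtype]

end Aff

open Aff

theorem stmt_19_general (k : ℕ) (hk : Odd k) [NeZero (2 * k)] :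
    (Fintype.card ↥(Aff (2 * k)) : ℚ)⁻¹ *
        (∑ A : Finset (ZMod (2 * k)),
          if MulAction.stabilizer ↥(Aff (2 * k)) A = ⊥ then (-1 : ℚ) ^ A.card else 0) =
      -(Nat.card (Quotient (orbitSetoid ↥(Aff (2 * k))
          (fun D : Finset (ZMod (2 * k)) =>
            D.card = k ∧ MulAction.stabilizer ↥(Aff (2 * k)) D = ⊥ ∧
              ∃ q : ↥(Aff (2 * k)), q • D = Dᶜ))) : ℚ) := by
  change (Fintype.card (Aff (2 * k)) : ℚ)⁻¹ *
      (∑ A : Finset (ZMod (2 * k)), if IsRigid k A then (-1 : ℚ) ^ A.card else 0) =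
    -(Nat.card (Quotient (orbitSetoid (Aff (2 * k)) (IsStrongDichotomy k))) : ℚ)
  have horbits := card_subtype_eq_card_quotient_orbitSetoid_mul (G := Aff (2 * k))
    (IsStrongDichotomy k) (fun g _ => isStrongDichotomy_smul g) fun _ hD => hD.2.1
  rw [sum_isRigid_neg_one_pow hk, horbits, Nat.card_eq_fintype_card (α := Aff (2 * k))]
  have hG : (Fintype.card (Aff (2 * k)) : ℚ) ≠ 0 := Nat.cast_ne_zero.2 Fintype.card_ne_zero
  push_cast
  field_simp

/-- Main theorem: for `k` an odd positive integer, `Q_rig(-1) = -s(2k)`, where `s(2k)` is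
the number of `Aff(ℤ/2kℤ)`-orbits of strong dichotomies (self-complementary rigid
`k`-subsets) and `Q_rig` is the rigid pattern-inventory polynomial. -/
theorem stmt_19 (k : ℕ) (hk : Odd k) (hk0 : 0 < k) [NeZero (2 * k)] :
    (Fintype.card ↥(Aff (2 * k)) : ℚ)⁻¹ *
        (∑ A : Finset (ZMod (2 * k)),
          if MulAction.stabilizer ↥(Aff (2 * k)) A = ⊥ then (-1 : ℚ) ^ A.card else 0) =
      -(Nat.card (Quotient (orbitSetoid ↥(Aff (2 * k))
          (fun D : Finset (ZMod (2 * k)) =>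
            D.card = k ∧ MulAction.stabilizer ↥(Aff (2 * k)) D = ⊥ ∧
              ∃ q : ↥(Aff (2 * k)), q • D = Dᶜ))) : ℚ) :=
  stmt_19_general k hk
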